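/- Let m ≤ p be positive integers. The space of pairs (X, Y) of complex matrices, with X of size m×p and Y of size p×m, satisfying T_m·S_m·Yᵀ = −X·T_p·S_p and Yᵀ·S_p·T_p = −S_m·T_m·X, is a ℂ-vector space of dimension 2m. -/

import Mathlib

open Matrix

noncomputable section

open scoped Classical

/-- The `m × m` upper-triangular Jordan block `J_{λ,m}` with eigenvalue `λ`. -/
def Jb (l : ℂ) (m : ℕ) : Matrix (Fin m) (Fin m) ℂ :=
  Matrix.of fun i j =>
    if (j : ℕ) = (i : ℕ) then l else if (j : ℕ) = (i : ℕ) + 1 then 1 else 0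

/-- The `m × m` anti-diagonal matrix `S_m` ( `(i,j)` entry is `1` iff `i + j = m + 1`,
1-based). -/
def Sb (m : ℕ) : Matrix (Fin m) (Fin m) ℂ :=
  Matrix.of fun i j => if (i : ℕ) + (j : ℕ) + 1 = m then 1 else 0

/-- The size `s(λ,m)` of the matrix `M_{λ,m}`: `m` if `λ ∈ ℝ`, and `2m` otherwise. -/
def sz (l : ℂ) (m : ℕ) : ℕ := if l.im = 0 then m else 2 * m

/-- The matrix `M_{λ,m}`: the Jordan block `J_{λ,m}` if `λ ∈ ℝ`, and the block matrix
`[[0, J_{λ²,m}], [I, 0]]` otherwise. -/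
def Mb (l : ℂ) (m : ℕ) : Matrix (Fin (sz l m)) (Fin (sz l m)) ℂ :=
  Matrix.of fun i j =>
    if l.im = 0 then
      (if (j : ℕ) = (i : ℕ) then l else if (j : ℕ) = (i : ℕ) + 1 then 1 else 0)
    else if (i : ℕ) < m ∧ m ≤ (j : ℕ) then
      (if (j : ℕ) - m = (i : ℕ) then l ^ 2
       else if (j : ℕ) - m = (i : ℕ) + 1 then 1 else 0)
    else if m ≤ (i : ℕ) ∧ (i : ℕ) - m = (j : ℕ) then 1 else 0

/-- The matrix `N_{λ,m}`: `S_m` if `λ ∈ ℝ` and `S_{2m}` otherwise. -/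
def Nb (l : ℂ) (m : ℕ) : Matrix (Fin (sz l m)) (Fin (sz l m)) ℂ := Sb (sz l m)

/-- A complex number is normalized if `Re λ ≥ 0` and, when `Re λ = 0`, also `Im λ ≥ 0`. -/
def Normalized (l : ℂ) : Prop := 0 ≤ l.re ∧ (l.re = 0 → 0 ≤ l.im)

/-- The linear map `B ↦ B * X + X * Bᵀ`. -/
def rmap {n : Type*} [Fintype n] (X : Matrix n n ℂ) :
    Matrix n n ℂ →ₗ[ℂ] Matrix n n ℂ where
  toFun B := B * X + X * Bᵀ
  map_add' B C := by
    simp only [Matrix.add_mul, Matrix.mul_add, Matrix.transpose_add]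
    abel
  map_smul' c B := by
    simp only [Matrix.smul_mul, Matrix.mul_smul, Matrix.transpose_smul, smul_add,
      RingHom.id_apply]

/-- The linear map `B ↦ Bᵀ * Y + Y * B`. -/
def lmap {n : Type*} [Fintype n] (Y : Matrix n n ℂ) :
    Matrix n n ℂ →ₗ[ℂ] Matrix n n ℂ where
  toFun B := Bᵀ * Y + Y * B
  map_add' B C := by
    simp only [Matrix.add_mul, Matrix.mul_add, Matrix.transpose_add]
    abel
  map_smul' c B := by
    simp only [Matrix.smul_mul, Matrix.mul_smul, Matrix.transpose_smul, smul_add,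
      RingHom.id_apply]

/-- The subspace `𝒜°` associated with `(H, A)`:  matrices `B` with
`B·A·H⁻¹ + A·H⁻¹·Bᵀ = 0` and `Bᵀ·H·conj(A) + H·conj(A)·B = 0`. -/
def scriptAo {n : Type*} [Fintype n] [DecidableEq n] (H A : Matrix n n ℂ) :
    Submodule ℂ (Matrix n n ℂ) :=
  LinearMap.ker (rmap (A * H⁻¹)) ⊓ LinearMap.ker (lmap (H * A.map (starRingEnd ℂ)))

/-- The subspace `𝒜` associated with `(H, A)`:  matrices `B` with
`B·A·H⁻¹ + A·H⁻¹·Bᵀ ∈ ℂ·(A·H⁻¹)` and `Bᵀ·H·conj(A) + H·conj(A)·B ∈ ℂ·(H·conj(A))`. -/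
def scriptA {n : Type*} [Fintype n] [DecidableEq n] (H A : Matrix n n ℂ) :
    Submodule ℂ (Matrix n n ℂ) :=
  Submodule.comap (rmap (A * H⁻¹)) (Submodule.span ℂ {A * H⁻¹}) ⊓
    Submodule.comap (lmap (H * A.map (starRingEnd ℂ)))
      (Submodule.span ℂ {H * A.map (starRingEnd ℂ)})

/-- The linear map whose kernel consists of the pairs `(X, Y)` with
`T_m·S_m·Yᵀ = −X·T_p·S_p` and `Yᵀ·S_p·T_p = −S_m·T_m·X`. -/
def pairMap (m p : ℕ) :
    (Matrix (Fin m) (Fin p) ℂ × Matrix (Fin p) (Fin m) ℂ) →ₗ[ℂ]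
      (Matrix (Fin m) (Fin p) ℂ × Matrix (Fin m) (Fin p) ℂ) where
  toFun Z := (Jb 0 m * Sb m * Z.2ᵀ + Z.1 * (Jb 0 p * Sb p),
    Z.2ᵀ * (Sb p * Jb 0 p) + Sb m * Jb 0 m * Z.1)
  map_add' Z W := by
    simp only [Prod.fst_add, Prod.snd_add, Matrix.transpose_add, Matrix.add_mul,
      Matrix.mul_add, Prod.mk_add_mk, Prod.mk.injEq]
    constructor <;> abel
  map_smul' c Z := by
    simp only [Prod.smul_fst, Prod.smul_snd, Matrix.transpose_smul, Matrix.smul_mul,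
      Matrix.mul_smul, Prod.smul_mk, smul_add, RingHom.id_apply]

/-!
Put `V = S_m Yᵀ S_p`. Since `S² = 1`, the two equations become `T_m V + X T_p = 0` and
`V T_p + T_m X = 0`, and their sum and difference decouple into the Sylvester equations
`T_m P + P T_p = 0` for `P = X + V` and `T_m Q - Q T_p = 0` for `Q = V - X`.

For `c ≠ 0` a solution of `T_m B + c B T_p = 0` satisfies `B_{i+1,j+1} = -c B_{i,j}`, vanishes in
the first column below the top and, since there is no row below the last one, in the last row
except at its end. Following diagonals, `B` is determined by its first row, and when `m ≤ p` that
row vanishes outside its last `m` entries. These entries can be chosen freely, so both kernels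
have dimension `m`.
-/

theorem Submodule.finrank_prod {K V W : Type*} [DivisionRing K] [AddCommGroup V] [Module K V]
    [AddCommGroup W] [Module K W] [FiniteDimensional K V] [FiniteDimensional K W]
    (p : Submodule K V) (q : Submodule K W) :
    Module.finrank K (p.prod q) = Module.finrank K p + Module.finrank K q := by
  have hrange : p.prod q = LinearMap.range (p.subtype.prodMap q.subtype) := by simp
  rw [hrange, LinearMap.finrank_range_of_inj
    (Prod.map_injective.2 ⟨p.injective_subtype, q.injective_subtype⟩), Module.finrank_prod]

def sumDiffEquiv (K V : Type*) [Field K] [CharZero K] [AddCommGroup V] [Module K V] :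
    (V × V) ≃ₗ[K] (V × V) where
  toFun z := (z.1 + z.2, z.2 - z.1)
  invFun w := ((2 : K)⁻¹ • (w.1 - w.2), (2 : K)⁻¹ • (w.1 + w.2))
  map_add' z w := by ext <;> simp only [Prod.fst_add, Prod.snd_add] <;> abel
  map_smul' a z := by ext <;> simp [smul_add, smul_sub]
  left_inv z := by ext <;> simp only <;> match_scalars <;> field_simp <;> ring
  right_inv w := by ext <;> simp only <;> match_scalars <;> field_simp <;> ring

theorem add_eq_zero_and_sub_eq_zero_iff {K V : Type*} [Field K] [CharZero K]
    [AddCommGroup V] [Module K V] {x y : V} :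
    x + y = 0 ∧ x - y = 0 ↔ x = 0 ∧ y = 0 := by
  constructor
  · rintro ⟨hsum, hdiff⟩
    have hx : (2 : K) • x = (x + y) + (x - y) := by rw [two_smul]; abel
    rw [hsum, hdiff, add_zero] at hx
    have hx0 : x = 0 := (smul_eq_zero.mp hx).resolve_left two_ne_zero
    exact ⟨hx0, by rwa [hx0, zero_add] at hsum⟩
  · rintro ⟨rfl, rfl⟩
    simp

def natEntry {α : Type*} [Zero α] {m p : ℕ} (B : Matrix (Fin m) (Fin p) α) (i j : ℕ) : α :=
  if h : i < m ∧ j < p then B ⟨i, h.1⟩ ⟨j, h.2⟩ else 0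

section NatEntry

variable {α : Type*} {m p : ℕ}

@[simp]
theorem natEntry_val [Zero α] (B : Matrix (Fin m) (Fin p) α) (i : Fin m) (j : Fin p) :
    natEntry B i j = B i j :=
  dif_pos ⟨i.isLt, j.isLt⟩

theorem natEntry_of_le_left [Zero α] (B : Matrix (Fin m) (Fin p) α) {i : ℕ} (j : ℕ)
    (hi : m ≤ i) : natEntry B i j = 0 :=
  dif_neg fun h => by omega

theorem natEntry_add [AddZeroClass α] (B C : Matrix (Fin m) (Fin p) α) (i j : ℕ) :
    natEntry (B + C) i j = natEntry B i j + natEntry C i j := by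
  unfold natEntry
  split_ifs <;> simp

theorem natEntry_smul {R : Type*} [Zero α] [SMulZeroClass R α] (a : R)
    (B : Matrix (Fin m) (Fin p) α) (i j : ℕ) :
    natEntry (a • B) i j = a • natEntry B i j := by
  unfold natEntry
  split_ifs <;> simp

end NatEntry

theorem Fin.sum_ite_val_eq {M : Type*} [AddCommMonoid M] {m : ℕ} (n : ℕ) (f : Fin m → M) :
    ∑ k : Fin m, (if (k : ℕ) = n then f k else 0) = if h : n < m then f ⟨n, h⟩ else 0 := by
  split_ifs with h
  · rw [Finset.sum_eq_single ⟨n, h⟩ (fun k _ hk => if_neg fun hkn => hk (Fin.ext hkn))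
      (fun hn => absurd (Finset.mem_univ _) hn), if_pos rfl]
  · exact Finset.sum_eq_zero fun k _ => if_neg (by omega)

section JordanShift

variable {m p : ℕ}

theorem Jb_zero_apply (i k : Fin m) : Jb 0 m i k = if (k : ℕ) = i + 1 then 1 else 0 := by
  simp only [Jb, of_apply]
  split_ifs <;> first | rfl | omega

theorem Jb_zero_mul_apply (B : Matrix (Fin m) (Fin p) ℂ) (i : Fin m) (j : Fin p) :
    (Jb 0 m * B) i j = natEntry B (i + 1) j := by
  simp only [mul_apply, Jb_zero_apply, ite_mul, one_mul, zero_mul, Fin.sum_ite_val_eq, natEntry,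
    j.isLt, and_true]

theorem mul_Jb_zero_apply (B : Matrix (Fin m) (Fin p) ℂ) (i : Fin m) (j : Fin p) :
    (B * Jb 0 p) i j = if (j : ℕ) = 0 then 0 else natEntry B i (j - 1) := by
  simp only [mul_apply, Jb_zero_apply, mul_ite, mul_one, mul_zero]
  split_ifs with hj
  · exact Finset.sum_eq_zero fun k _ => if_neg (by omega)
  · have hcond : ∀ k : Fin p, ((j : ℕ) = k + 1) = ((k : ℕ) = j - 1) := fun k =>
      propext (by omega)
    simp only [hcond, Fin.sum_ite_val_eq, natEntry, i.isLt, true_and]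

end JordanShift

theorem Sb_transpose (n : ℕ) : (Sb n)ᵀ = Sb n := by
  ext i j
  simp only [transpose_apply, Sb, of_apply, Nat.add_comm (j : ℕ)]

theorem Sb_mul_Sb (n : ℕ) : Sb n * Sb n = 1 := by
  ext i j
  have hcond : ∀ k : Fin n, ((i : ℕ) + k + 1 = n) = ((k : ℕ) = n - 1 - i) := fun k =>
    propext (by omega)
  simp only [mul_apply, Sb, of_apply, ite_mul, one_mul, zero_mul, hcond, Fin.sum_ite_val_eq,
    one_apply, Fin.ext_iff]
  have := i.isLt
  have := j.isLt
  split_ifs <;> first | rfl | omega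

def shiftSylvester (m p : ℕ) (c : ℂ) :
    Matrix (Fin m) (Fin p) ℂ →ₗ[ℂ] Matrix (Fin m) (Fin p) ℂ where
  toFun B := Jb 0 m * B + c • (B * Jb 0 p)
  map_add' B C := by
    simp only [Matrix.mul_add, Matrix.add_mul, smul_add]
    abel
  map_smul' a B := by
    simp only [Matrix.mul_smul, Matrix.smul_mul, RingHom.id_apply, smul_add, smul_comm c a]

section ShiftSylvester

variable {m p : ℕ} {c : ℂ} {B : Matrix (Fin m) (Fin p) ℂ}

theorem shiftSylvester_apply (B : Matrix (Fin m) (Fin p) ℂ) (i : Fin m) (j : Fin p) :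
    shiftSylvester m p c B i j =
      natEntry B (i + 1) j + c * if (j : ℕ) = 0 then 0 else natEntry B i (j - 1) := by
  simp only [shiftSylvester, LinearMap.coe_mk, AddHom.coe_mk, Matrix.add_apply,
    Matrix.smul_apply, smul_eq_mul, Jb_zero_mul_apply, mul_Jb_zero_apply]

theorem natEntry_succ_of_shiftSylvester_eq_zero (hB : shiftSylvester m p c B = 0) (i : ℕ)
    {j : ℕ} (hj : j < p) :
    natEntry B (i + 1) j + c * (if j = 0 then 0 else natEntry B i (j - 1)) = 0 := by
  by_cases hi : i < m
  · simpa only [shiftSylvester_apply, Matrix.zero_apply] using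
      congrFun (congrFun hB ⟨i, hi⟩) ⟨j, hj⟩
  · simp [natEntry_of_le_left B _ (not_lt.mp hi), natEntry_of_le_left B (i := i + 1) _ (by omega)]

theorem natEntry_succ_zero_of_shiftSylvester_eq_zero (hB : shiftSylvester m p c B = 0)
    (i : ℕ) : natEntry B (i + 1) 0 = 0 := by
  rcases Nat.eq_zero_or_pos p with rfl | hp
  · exact dif_neg fun h => by omega
  · simpa using natEntry_succ_of_shiftSylvester_eq_zero hB i hp

theorem natEntry_succ_succ_of_shiftSylvester_eq_zero (hB : shiftSylvester m p c B = 0)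
    (i : ℕ) {j : ℕ} (hj : j + 1 < p) : natEntry B (i + 1) (j + 1) = -c * natEntry B i j := by
  linear_combination (by simpa using natEntry_succ_of_shiftSylvester_eq_zero hB i hj :
    natEntry B (i + 1) (j + 1) + c * natEntry B i j = 0)

theorem natEntry_add_add_of_shiftSylvester_eq_zero (hB : shiftSylvester m p c B = 0)
    (i j : ℕ) {k : ℕ} (hk : j + k < p) :
    natEntry B (i + k) (j + k) = (-c) ^ k * natEntry B i j := by
  induction k with
  | zero => simp
  | succ k ih =>
    rw [← add_assoc, ← add_assoc, natEntry_succ_succ_of_shiftSylvester_eq_zero hB _ (by omega),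
      ih (by omega), pow_succ]
    ring

theorem eq_zero_of_shiftSylvester_eq_zero (hB : shiftSylvester m p c B = 0) (hc : c ≠ 0)
    (hmp : m ≤ p) (htail : ∀ t < m, natEntry B 0 (p - m + t) = 0) : B = 0 := by
  ext i j
  have hm : 0 < m := i.pos
  have hrow : ∀ d < p, natEntry B 0 d = 0 := by
    intro d hd
    by_cases hdm : p - m ≤ d
    · simpa [Nat.add_sub_cancel' hdm] using htail (d - (p - m)) (by omega)
    · have hlast := natEntry_succ_succ_of_shiftSylvester_eq_zero hB (m - 1)
        (j := d + (m - 1)) (by omega)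
      have hdiag := natEntry_add_add_of_shiftSylvester_eq_zero hB 0 d (k := m - 1) (by omega)
      rw [zero_add] at hdiag
      rw [natEntry_of_le_left B _ (by omega), hdiag] at hlast
      simpa [hc] using hlast.symm
  rw [Matrix.zero_apply, ← natEntry_val B i j]
  rcases le_or_gt (i : ℕ) j with hij | hij
  · have := natEntry_add_add_of_shiftSylvester_eq_zero hB 0 (j - i) (k := i) (by omega)
    rw [zero_add, Nat.sub_add_cancel hij, hrow _ (by omega), mul_zero] at this
    exact this
  · have := natEntry_add_add_of_shiftSylvester_eq_zero hB (i - j) 0 (k := j) (by omega)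
    rw [zero_add, Nat.sub_add_cancel hij.le, ← Nat.sub_add_cancel (Nat.sub_pos_of_lt hij),
      natEntry_succ_zero_of_shiftSylvester_eq_zero hB, mul_zero] at this
    exact this

end ShiftSylvester

def topRowTail (m p : ℕ) : Matrix (Fin m) (Fin p) ℂ →ₗ[ℂ] Fin m → ℂ where
  toFun B t := natEntry B 0 (p - m + t)
  map_add' B C := funext fun _ => natEntry_add B C 0 _
  map_smul' a B := funext fun _ => natEntry_smul a B 0 _

def natCoord {m : ℕ} (v : Fin m → ℂ) (d : ℕ) : ℂ := if h : d < m then v ⟨d, h⟩ else 0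

def shiftSylvesterSolution (m p : ℕ) (c : ℂ) :
    (Fin m → ℂ) →ₗ[ℂ] Matrix (Fin m) (Fin p) ℂ where
  toFun v := of fun i j =>
    if (i : ℕ) + (p - m) ≤ j then (-c) ^ (i : ℕ) * natCoord v (j - i - (p - m)) else 0
  map_add' v w := by
    ext i j
    simp only [of_apply, Matrix.add_apply, natCoord, Pi.add_apply]
    split_ifs <;> ring
  map_smul' a v := by
    ext i j
    simp only [of_apply, Matrix.smul_apply, natCoord, Pi.smul_apply, smul_eq_mul,
      RingHom.id_apply]
    split_ifs <;> ring

section ShiftSylvesterKernel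

variable {m p : ℕ} {c : ℂ}

theorem shiftSylvester_shiftSylvesterSolution (v : Fin m → ℂ) :
    shiftSylvester m p c (shiftSylvesterSolution m p c v) = 0 := by
  ext i j
  have := i.isLt
  have := j.isLt
  simp only [shiftSylvester_apply, natEntry, shiftSylvesterSolution, LinearMap.coe_mk,
    AddHom.coe_mk, of_apply, Matrix.zero_apply]
  split_ifs <;> first
    | omega
    | ring1
    | rw [show (j : ℕ) - 1 - i - (p - m) = j - (i + 1) - (p - m) by omega]; ring

theorem topRowTail_shiftSylvesterSolution (hmp : m ≤ p) (v : Fin m → ℂ) :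
    topRowTail m p (shiftSylvesterSolution m p c v) = v := by
  funext t
  have := t.isLt
  simp only [topRowTail, shiftSylvesterSolution, LinearMap.coe_mk, AddHom.coe_mk, natEntry,
    of_apply, natCoord]
  rw [dif_pos ⟨by omega, by omega⟩, if_pos (by omega), dif_pos (by omega)]
  simp only [pow_zero, one_mul]
  congr
  omega

theorem finrank_ker_shiftSylvester (hc : c ≠ 0) (hmp : m ≤ p) :
    Module.finrank ℂ (LinearMap.ker (shiftSylvester m p c)) = m := by
  let f := (topRowTail m p).domRestrict (LinearMap.ker (shiftSylvester m p c))
  have hinj : Function.Injective f := by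
    rw [← LinearMap.ker_eq_bot, Submodule.eq_bot_iff]
    rintro ⟨B, hB⟩ hf
    exact Subtype.ext (eq_zero_of_shiftSylvester_eq_zero hB hc hmp fun t ht =>
      congrFun hf ⟨t, ht⟩)
  have hsurj : Function.Surjective f := fun v =>
    ⟨⟨_, shiftSylvester_shiftSylvesterSolution v⟩, topRowTail_shiftSylvesterSolution hmp v⟩
  rw [(LinearEquiv.ofBijective f ⟨hinj, hsurj⟩).finrank_eq, Module.finrank_fin_fun]

end ShiftSylvesterKernel

section Antidiagonal

variable {n q : ℕ}

theorem Sb_mul_Sb_mul (M : Matrix (Fin n) (Fin q) ℂ) : Sb n * (Sb n * M) = M := by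
  rw [← Matrix.mul_assoc, Sb_mul_Sb, Matrix.one_mul]

theorem Sb_mul_eq_zero_iff {M : Matrix (Fin n) (Fin q) ℂ} : Sb n * M = 0 ↔ M = 0 :=
  ⟨fun h => by simpa only [Sb_mul_Sb_mul, Matrix.mul_zero] using congrArg (Sb n * ·) h,
    fun h => by rw [h, Matrix.mul_zero]⟩

theorem mul_Sb_eq_zero_iff {M : Matrix (Fin q) (Fin n) ℂ} : M * Sb n = 0 ↔ M = 0 :=
  ⟨fun h => by
    simpa only [Matrix.mul_assoc, Sb_mul_Sb, Matrix.mul_one, Matrix.zero_mul] using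
      congrArg (· * Sb n) h,
    fun h => by rw [h, Matrix.zero_mul]⟩

end Antidiagonal

def antitransposeEquiv (m p : ℕ) :
    Matrix (Fin p) (Fin m) ℂ ≃ₗ[ℂ] Matrix (Fin m) (Fin p) ℂ where
  toFun Y := Sb m * Yᵀ * Sb p
  invFun V := Sb p * Vᵀ * Sb m
  map_add' Y Z := by simp only [transpose_add, Matrix.mul_add, Matrix.add_mul]
  map_smul' a Y := by
    simp only [transpose_smul, Matrix.mul_smul, Matrix.smul_mul, RingHom.id_apply]
  left_inv Y := by
    simp only [transpose_mul, transpose_transpose, Sb_transpose, Matrix.mul_assoc, Sb_mul_Sb,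
      Sb_mul_Sb_mul, Matrix.mul_one]
  right_inv V := by
    simp only [transpose_mul, transpose_transpose, Sb_transpose, Matrix.mul_assoc, Sb_mul_Sb,
      Sb_mul_Sb_mul, Matrix.mul_one]

def pairMapDecoupling (m p : ℕ) :
    (Matrix (Fin m) (Fin p) ℂ × Matrix (Fin p) (Fin m) ℂ) ≃ₗ[ℂ]
      (Matrix (Fin m) (Fin p) ℂ × Matrix (Fin m) (Fin p) ℂ) :=
  ((LinearEquiv.refl ℂ _).prodCongr (antitransposeEquiv m p)).trans (sumDiffEquiv ℂ _)

theorem ker_pairMap (m p : ℕ) :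
    LinearMap.ker (pairMap m p) =
      ((LinearMap.ker (shiftSylvester m p 1)).prod
        (LinearMap.ker (shiftSylvester m p (-1)))).comap
        (pairMapDecoupling m p).toLinearMap := by
  ext ⟨X, Y⟩
  set V := antitransposeEquiv m p Y
  have hY : Yᵀ = Sb m * V * Sb p := by
    simp only [V, antitransposeEquiv, LinearEquiv.coe_mk, LinearMap.coe_mk, AddHom.coe_mk,
      Matrix.mul_assoc, Sb_mul_Sb, Sb_mul_Sb_mul, Matrix.mul_one]
  set L := Jb 0 m * V + X * Jb 0 p
  set R := V * Jb 0 p + Jb 0 m * X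
  have hpair : pairMap m p (X, Y) = (L * Sb p, Sb m * R) := by
    change (Jb 0 m * Sb m * Yᵀ + X * (Jb 0 p * Sb p),
      Yᵀ * (Sb p * Jb 0 p) + Sb m * Jb 0 m * X) = _
    rw [hY]
    simp only [L, R, Matrix.mul_assoc, Matrix.add_mul, Matrix.mul_add, Sb_mul_Sb_mul]
  have hplus : shiftSylvester m p 1 (X + V) = L + R := by
    simp only [L, R, shiftSylvester, LinearMap.coe_mk, AddHom.coe_mk, one_smul, Matrix.mul_add,
      Matrix.add_mul]
    abel
  have hminus : shiftSylvester m p (-1) (V - X) = L - R := by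
    simp only [L, R, shiftSylvester, LinearMap.coe_mk, AddHom.coe_mk, neg_smul, one_smul,
      Matrix.mul_sub, Matrix.sub_mul]
    abel
  have hdecouple : pairMapDecoupling m p (X, Y) = (X + V, V - X) := rfl
  simp only [LinearMap.mem_ker, Submodule.mem_comap, LinearEquiv.coe_coe, Submodule.mem_prod,
    hdecouple, hpair, hplus, hminus]
  rw [add_eq_zero_and_sub_eq_zero_iff (K := ℂ), Prod.mk_eq_zero, mul_Sb_eq_zero_iff,
    Sb_mul_eq_zero_iff]

theorem stmt5_general (m p : ℕ) (hmp : m ≤ p) :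
    Module.finrank ℂ ↥(LinearMap.ker (pairMap m p)) = 2 * m := by
  rw [ker_pairMap, Submodule.comap_equiv_eq_map_symm, LinearEquiv.finrank_map_eq,
    Submodule.finrank_prod, finrank_ker_shiftSylvester one_ne_zero hmp,
    finrank_ker_shiftSylvester (neg_ne_zero.2 one_ne_zero) hmp, two_mul]

/-- For `m ≤ p` the space of pairs `(X, Y)` of complex matrices with
`T_m·S_m·Yᵀ = −X·T_p·S_p` and `Yᵀ·S_p·T_p = −S_m·T_m·X` has dimension `2m`. -/
theorem stmt5 (m p : ℕ) (hm : 0 < m) (hmp : m ≤ p) :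
    Module.finrank ℂ ↥(LinearMap.ker (pairMap m p)) = 2 * m :=
  stmt5_general m p hmp
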